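/- L⁺_ω is sound with respect to interpretation on formal languages: if the sequent A₁, …, Aₙ → B is derivable in L⁺_ω, then for every alphabet Σ and every interpretation w mapping each primitive type to a language over Σ not containing the empty word, extended to all types by w(A·B) = w(A)·w(B), w(A\B) = { u ∈ Σ⁺ | ∀ v ∈ w(A), vu ∈ w(B) }, w(B/A) = { u ∈ Σ⁺ | ∀ v ∈ w(A), uv ∈ w(B) }, and w(A⁺) = { u₁…uₘ | m ≥ 1, each uᵢ ∈ w(A) }, one has w(A₁)·…·w(Aₙ) ⊆ w(B). -/

import Mathlib

/-- Types (formulae) of the Lambek calculus with positive iteration: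
primitive types, product `mul`, left division `ldiv A B = A \ B`,
right division `rdiv B A = B / A`, and positive iteration `plus A = A⁺`. -/
inductive Fm : Type where
  | pr : ℕ → Fm
  | mul : Fm → Fm → Fm
  | ldiv : Fm → Fm → Fm   -- `ldiv A B` is `A \ B`
  | rdiv : Fm → Fm → Fm   -- `rdiv B A` is `B / A`
  | plus : Fm → Fm

/-- Derivability in the infinitary calculus L⁺_ω.  `DerLw P A` means the sequent
`P → A` is derivable.  Derivations are well-founded trees; the rule `plus_l`
is the ω-rule with infinitely many premises. -/
inductive DerLw : List Fm → Fm → Prop where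
  | ax (A : Fm) : DerLw [A] A
  | ldiv_r {P : List Fm} {A B : Fm} (hne : P ≠ []) :
      DerLw (A :: P) B → DerLw P (Fm.ldiv A B)
  | ldiv_l {P Γ Δ : List Fm} {A B C : Fm} :
      DerLw P A → DerLw (Γ ++ B :: Δ) C →
      DerLw (Γ ++ P ++ Fm.ldiv A B :: Δ) C
  | rdiv_r {P : List Fm} {A B : Fm} (hne : P ≠ []) :
      DerLw (P ++ [A]) B → DerLw P (Fm.rdiv B A)
  | rdiv_l {P Γ Δ : List Fm} {A B C : Fm} :
      DerLw P A → DerLw (Γ ++ B :: Δ) C →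
      DerLw (Γ ++ Fm.rdiv B A :: (P ++ Δ)) C
  | mul_r {Γ Δ : List Fm} {A B : Fm} :
      DerLw Γ A → DerLw Δ B → DerLw (Γ ++ Δ) (Fm.mul A B)
  | mul_l {Γ Δ : List Fm} {A B C : Fm} :
      DerLw (Γ ++ A :: B :: Δ) C → DerLw (Γ ++ Fm.mul A B :: Δ) C
  | plus_r {A : Fm} (Ps : List (List Fm)) (hne : Ps ≠ []) :
      (∀ P ∈ Ps, DerLw P A) → DerLw Ps.flatten (Fm.plus A)
  | plus_l {Γ Δ : List Fm} {A C : Fm} :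
      (∀ n : ℕ, 1 ≤ n → DerLw (Γ ++ List.replicate n A ++ Δ) C) →
      DerLw (Γ ++ Fm.plus A :: Δ) C

/-- Interpretation of types as formal languages over an alphabet `σ`,
given an interpretation `w` of the primitive types. -/
def interp {σ : Type*} (w : ℕ → Language σ) : Fm → Language σ
  | Fm.pr q => w q
  | Fm.mul A B => interp w A * interp w B
  | Fm.ldiv A B => { u | u ≠ [] ∧ ∀ v ∈ interp w A, v ++ u ∈ interp w B }
  | Fm.rdiv B A => { u | u ≠ [] ∧ ∀ v ∈ interp w A, u ++ v ∈ interp w B }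
  | Fm.plus A =>
      { u | ∃ l : List (List σ), l ≠ [] ∧ (∀ v ∈ l, v ∈ interp w A) ∧ u = l.flatten }

/-!
Read a context `A₁, …, Aₙ` as the product `w(A₁)·…·w(Aₙ)` in the ordered semiring of
languages; every rule of L⁺_ω then preserves `w(Γ) ≤ w(C)`.  The division rules are
residuation: `w(A)·w(A\B) ≤ w(B)`, and `L ≤ w(A\B)` as soon as `w(A)·L ≤ w(B)` and
`[] ∉ L`, which Lambek's restriction provides because no `w(p)` contains the empty word.
Both `⁺` rules follow from `w(A⁺) = ⨆ n ≥ 1, w(A)ⁿ`, over which products distribute.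
-/

namespace Language

variable {α : Type*} {l m : Language α}

theorem nil_mem_mul_iff : [] ∈ l * m ↔ [] ∈ l ∧ [] ∈ m := by
  simp only [mem_mul, List.append_eq_nil_iff]
  constructor
  · rintro ⟨_, hl, _, hm, rfl, rfl⟩
    exact ⟨hl, hm⟩
  · rintro ⟨hl, hm⟩
    exact ⟨[], hl, [], hm, rfl, rfl⟩

end Language

namespace Fm

variable {σ : Type*} {w : ℕ → Language σ}

theorem interp_plus (A : Fm) : interp w (plus A) = ⨆ n ≥ 1, interp w A ^ n := by
  ext u
  simp only [interp, Language.mem_iSup, Language.mem_pow]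
  constructor
  · rintro ⟨S, hS, hmem, rfl⟩
    exact ⟨S.length, List.length_pos_iff.mpr hS, S, rfl, rfl, hmem⟩
  · rintro ⟨n, hn, S, rfl, rfl, hmem⟩
    exact ⟨S, List.length_pos_iff.mp hn, hmem, rfl⟩

theorem interp_mul_interp_ldiv_le (A B : Fm) : interp w A * interp w (ldiv A B) ≤ interp w B := by
  rintro _ ⟨v, hv, _, hu, rfl⟩
  exact hu.2 v hv

theorem interp_rdiv_mul_interp_le (A B : Fm) : interp w (rdiv B A) * interp w A ≤ interp w B := by
  rintro _ ⟨_, hu, v, hv, rfl⟩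
  exact hu.2 v hv

theorem le_interp_ldiv {A B : Fm} {L : Language σ} (hL : [] ∉ L)
    (h : interp w A * L ≤ interp w B) : L ≤ interp w (ldiv A B) := by
  intro u hu
  exact ⟨fun hnil => hL (hnil ▸ hu), fun v hv => h (Language.append_mem_mul hv hu)⟩

theorem le_interp_rdiv {A B : Fm} {L : Language σ} (hL : [] ∉ L)
    (h : L * interp w A ≤ interp w B) : L ≤ interp w (rdiv B A) := by
  intro u hu
  exact ⟨fun hnil => hL (hnil ▸ hu), fun v hv => h (Language.append_mem_mul hu hv)⟩

theorem nil_notMem_interp (hw : ∀ q, [] ∉ w q) : ∀ A : Fm, [] ∉ interp w A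
  | pr q => hw q
  | mul A _ => fun h => nil_notMem_interp hw A (Language.nil_mem_mul_iff.mp h).1
  | ldiv _ _ => fun h => h.1 rfl
  | rdiv _ _ => fun h => h.1 rfl
  | plus A => by
    simp only [interp_plus, Language.mem_iSup, not_exists]
    rintro (_ | n) hn h
    · omega
    · rw [pow_succ', Language.nil_mem_mul_iff] at h
      exact nil_notMem_interp hw A h.1

theorem nil_notMem_prod_interp (hw : ∀ q, [] ∉ w q) {P : List Fm} (hP : P ≠ []) :
    [] ∉ (P.map (interp w)).prod := by
  obtain ⟨A, P, rfl⟩ := List.exists_cons_of_ne_nil hP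
  rw [List.map_cons, List.prod_cons, Language.nil_mem_mul_iff]
  exact fun h => nil_notMem_interp hw A h.1

theorem prod_map_interp_append_cons (Γ Δ : List Fm) (A : Fm) :
    ((Γ ++ A :: Δ).map (interp w)).prod =
      (Γ.map (interp w)).prod * interp w A * (Δ.map (interp w)).prod := by
  simp only [List.map_append, List.map_cons, List.prod_append, List.prod_cons, mul_assoc]

end Fm

theorem DerLw.prod_interp_le {P : List Fm} {B : Fm} (h : DerLw P B) {σ : Type*}
    {w : ℕ → Language σ} (hw : ∀ q, [] ∉ w q) : (P.map (interp w)).prod ≤ interp w B := by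
  induction h with
  | ax A => simp
  | ldiv_r hP _ ih =>
    exact Fm.le_interp_ldiv (Fm.nil_notMem_prod_interp hw hP) (by simpa using ih)
  | rdiv_r hP _ ih =>
    exact Fm.le_interp_rdiv (Fm.nil_notMem_prod_interp hw hP) (by simpa using ih)
  | @ldiv_l P _ _ A B _ _ _ ih₁ ih₂ =>
    rw [Fm.prod_map_interp_append_cons] at ih₂ ⊢
    refine le_trans ?_ ih₂
    rw [List.map_append, List.prod_append, mul_assoc (List.prod _)]
    gcongr
    calc (P.map (interp w)).prod * interp w (Fm.ldiv A B)
        _ ≤ interp w A * interp w (Fm.ldiv A B) := by gcongr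
        _ ≤ interp w B := Fm.interp_mul_interp_ldiv_le A B
  | @rdiv_l P _ _ A B _ _ _ ih₁ ih₂ =>
    rw [Fm.prod_map_interp_append_cons] at ih₂ ⊢
    refine le_trans ?_ ih₂
    rw [List.map_append, List.prod_append, ← mul_assoc, mul_assoc (List.prod _)]
    gcongr
    calc interp w (Fm.rdiv B A) * (P.map (interp w)).prod
        _ ≤ interp w (Fm.rdiv B A) * interp w A := by gcongr
        _ ≤ interp w B := Fm.interp_rdiv_mul_interp_le A B
  | mul_r _ _ ih₁ ih₂ =>
    rw [List.map_append, List.prod_append]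
    exact mul_le_mul' ih₁ ih₂
  | mul_l _ ih =>
    simpa [Fm.prod_map_interp_append_cons, interp, mul_assoc] using ih
  | @plus_r A Ps hPs _ ih =>
    rw [List.map_flatten, List.prod_flatten, Fm.interp_plus]
    refine le_iSup₂_of_le Ps.length (List.length_pos_iff.mpr hPs) ?_
    refine (List.prod_le_pow_card _ (interp w A) ?_).trans_eq (by simp)
    simpa using ih
  | plus_l _ ih =>
    rw [Fm.prod_map_interp_append_cons, Fm.interp_plus]
    simp only [Language.mul_iSup, Language.iSup_mul]
    refine iSup₂_le fun n hn => ?_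
    simpa [List.map_replicate, List.prod_replicate, mul_assoc] using ih n hn

/-- Soundness of L⁺_ω with respect to the interpretation on formal languages:
if `A₁, …, Aₙ → B` is derivable then `w(A₁)·…·w(Aₙ) ⊆ w(B)` for every
interpretation `w` of the primitive types by languages not containing
the empty word. -/
theorem soundness {P : List Fm} {B : Fm} (h : DerLw P B) :
    ∀ (σ : Type) (w : ℕ → Language σ), (∀ q, [] ∉ w q) →
      ∀ u, u ∈ (P.map (interp w)).prod → u ∈ interp w B :=
  fun _ _ hw _ hu => h.prod_interp_le hw hu
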